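/- arXiv:2311.07110 — 2 statements merged into one kernel-verified Lean document; each statement's English description precedes it below -/
import Mathlib

section
/- Suppose the noise-estimator perturbation satisfies ε_θ(x_t + Δx_t, t) - ε_θ(x_t, t) = Δx_t/√(1-ᾱ_t) + γ with ‖γ‖₂ ≤ C_t‖Δx_t‖₂, where C_t = (1 - √(1-ᾱ_{t-1})/√(1-ᾱ_t))/C_{ε_t} and C_{ε_t} = 1/√(ᾱ_t) - √(1-ᾱ_{t-1})/√(1-ᾱ_t). Then under the deterministic DDIM backward step x_{t-1} = (x_t - √(1-ᾱ_t) ε_θ(x_t,t))/√(ᾱ_t) + √(1-ᾱ_{t-1}) ε_θ(x_t,t), the difference satisfies ‖x'_{t-1} - x_{t-1}‖₂ ≤ ‖x'_t - x_t‖₂. -/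
/-!
Writing `ρ = √(1-ᾱ_{t-1}) / √(1-ᾱ_t)`, the step maps the perturbation `Δx_t` to
`ρ Δx_t - √(1-ᾱ_t) C_ε γ`: the part of `Δε_θ` proportional to `Δx_t` cancels against the
`1/√ᾱ_t` rescaling up to the factor `ρ`. The tolerance `C_t` is chosen so that
`√(1-ᾱ_t) C_ε ‖γ‖ ≤ √(1-ᾱ_t) (1 - ρ) ‖Δx_t‖`, and `ρ + √(1-ᾱ_t) (1 - ρ) ≤ 1`
because `0 ≤ ρ ≤ 1` and `√(1-ᾱ_t) ≤ 1`.
-/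

open Real

namespace DDIM

variable {E : Type*} [NormedAddCommGroup E] [NormedSpace ℝ E]

/-- The deterministic DDIM step from noise level `a = ᾱ_t` to `b = ᾱ_{t-1}`,
given the predicted noise `ε`. -/
noncomputable def step (a b : ℝ) (x ε : E) : E :=
  (√a)⁻¹ • (x - √(1 - a) • ε) + √(1 - b) • ε

noncomputable def noiseRatio (a b : ℝ) : ℝ := √(1 - b) / √(1 - a)

/-- The constant `C_{ε_t}`. -/
noncomputable def noiseGain (a b : ℝ) : ℝ := 1 / √a - noiseRatio a b

/-- The constant `C_t`. -/
noncomputable def tolerance (a b : ℝ) : ℝ := (1 - noiseRatio a b) * (noiseGain a b)⁻¹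

lemma noiseRatio_nonneg (a b : ℝ) : 0 ≤ noiseRatio a b := by
  unfold noiseRatio; positivity

lemma noiseRatio_le_one {a b : ℝ} (hab : a ≤ b) : noiseRatio a b ≤ 1 :=
  div_le_one_of_le₀ (sqrt_le_sqrt (by linarith)) (sqrt_nonneg _)

lemma noiseGain_pos {a b : ℝ} (h0 : 0 < a) (hab : a ≤ b) (ha1 : a < 1) :
    0 < noiseGain a b := by
  have hsa : √a < 1 := (sqrt_lt' one_pos).mpr (by simpa using ha1)
  have : 1 < 1 / √a := by rw [lt_div_iff₀ (sqrt_pos.mpr h0)]; linarith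
  unfold noiseGain
  linarith [noiseRatio_le_one hab]

lemma noiseGain_mul_tolerance {a b : ℝ} (h0 : 0 < a) (hab : a ≤ b) (ha1 : a < 1) :
    noiseGain a b * tolerance a b = 1 - noiseRatio a b := by
  rw [tolerance, mul_left_comm, mul_inv_cancel₀ (noiseGain_pos h0 hab ha1).ne', mul_one]

lemma step_sub_step (a b : ℝ) (x x' ε ε' : E) :
    step a b x' ε' - step a b x ε
      = (√a)⁻¹ • (x' - x) + (√(1 - b) - √(1 - a) / √a) • (ε' - ε) := by
  simp only [step, smul_sub, sub_smul, div_eq_inv_mul, mul_smul]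
  abel

lemma step_sub_step_of_noise_sub {a b : ℝ} (ha1 : a < 1) {x x' ε ε' γ : E}
    (hε : ε' - ε = (√(1 - a))⁻¹ • (x' - x) + γ) :
    step a b x' ε' - step a b x ε
      = noiseRatio a b • (x' - x) - (√(1 - a) * noiseGain a b) • γ := by
  have hs : √(1 - a) ≠ 0 := (sqrt_pos.mpr (by linarith)).ne'
  rw [step_sub_step, hε, noiseGain, noiseRatio]
  match_scalars <;> field_simp <;> ring

lemma norm_step_sub_step_le {a b : ℝ} (h0 : 0 < a) (hab : a ≤ b) (ha1 : a < 1)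
    {x x' ε ε' γ : E} (hε : ε' - ε = (√(1 - a))⁻¹ • (x' - x) + γ)
    (hγ : ‖γ‖ ≤ tolerance a b * ‖x' - x‖) :
    ‖step a b x' ε' - step a b x ε‖ ≤ ‖x' - x‖ := by
  set ρ := noiseRatio a b
  set s := √(1 - a)
  have hρ0 : 0 ≤ ρ := noiseRatio_nonneg a b
  have hρ1 : ρ ≤ 1 := noiseRatio_le_one hab
  have hs1 : s ≤ 1 := sqrt_le_one.mpr (by linarith)
  have hsC : 0 ≤ s * noiseGain a b := by
    have := noiseGain_pos h0 hab ha1; positivity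
  calc ‖step a b x' ε' - step a b x ε‖
      = ‖ρ • (x' - x) - (s * noiseGain a b) • γ‖ := by
        rw [step_sub_step_of_noise_sub ha1 hε]
    _ ≤ ρ * ‖x' - x‖ + s * noiseGain a b * ‖γ‖ := by
        refine (norm_sub_le _ _).trans_eq ?_
        rw [norm_smul, norm_smul, norm_of_nonneg hρ0, norm_of_nonneg hsC]
    _ ≤ ρ * ‖x' - x‖ + s * noiseGain a b * (tolerance a b * ‖x' - x‖) := by gcongr
    _ = (ρ + s * (1 - ρ)) * ‖x' - x‖ := by
        rw [← noiseGain_mul_tolerance h0 hab ha1]; ring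
    _ ≤ ‖x' - x‖ := by
        refine mul_le_of_le_one_left (norm_nonneg _) ?_
        nlinarith

end DDIM

/-- One DDIM backward step is non-expansive given the noise-estimator decomposition. -/
theorem ddim_backward_step_nonexpansive
    (n : ℕ) (xt xt' γ : EuclideanSpace ℝ (Fin n))
    (a b : ℝ) (h0 : 0 < a) (hab : a < b) (hb1 : b < 1)
    (εθ : EuclideanSpace ℝ (Fin n) → ℕ → EuclideanSpace ℝ (Fin n)) (t : ℕ)
    (hdecomp : εθ xt' t - εθ xt t
        = (Real.sqrt (1 - a))⁻¹ • (xt' - xt) + γ)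
    (hγ : ‖γ‖ ≤ ((1 - Real.sqrt (1 - b) / Real.sqrt (1 - a)) *
        (1 / Real.sqrt a - Real.sqrt (1 - b) / Real.sqrt (1 - a))⁻¹) * ‖xt' - xt‖)
    (xtm1 xtm1' : EuclideanSpace ℝ (Fin n))
    (hstep : xtm1 = (Real.sqrt a)⁻¹ • (xt - Real.sqrt (1 - a) • εθ xt t)
        + Real.sqrt (1 - b) • εθ xt t)
    (hstep' : xtm1' = (Real.sqrt a)⁻¹ • (xt' - Real.sqrt (1 - a) • εθ xt' t)
        + Real.sqrt (1 - b) • εθ xt' t) :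
    ‖xtm1' - xtm1‖ ≤ ‖xt' - xt‖ := by
  subst hstep hstep'
  exact DDIM.norm_step_sub_step_le h0 hab.le (hab.trans hb1) hdecomp hγ
end

section
/- Combining the previous facts: if at every backward step t (from T* down to 1) the noise estimator perturbation decomposes as ε_θ(x'_t,t) - ε_θ(x_t,t) = (x'_t - x_t)/√(1-ᾱ_t) + γ_t with ‖γ_t‖₂ ≤ C_t‖x'_t - x_t‖₂, then by induction ‖x'_0 - x_0‖₂ ≤ ‖x'_{T*} - x_{T*}‖₂; i.e., the full backward process is non-expansive with respect to the L₂ distance between the original and compromised trajectories. -/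
/-!
Subtracting the two DDIM steps, the linear part `(x'_t - x_t) / √(1 - ᾱ_t)` of the noise
difference cancels all but the fraction `p / s` of `x'_t - x_t`, where `s = √(1 - ᾱ_t)` and
`p = √(1 - ᾱ_{t-1})`; what is left is `(p / s) (x'_t - x_t) - (s / √ᾱ_t - p) γ_t`. The constant
`C_t` is exactly `(s - p) / (s / √ᾱ_t - p)`, so one step multiplies the distance by at most
`p / s + (s - p)`, which is `≤ 1` because `(s - p) (1 - s) ≥ 0`. Induction over `t` then gives
the claim.
-/

open Real

section
variable {E : Type*} [NormedAddCommGroup E] [NormedSpace ℝ E]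

lemma ddim_update_eq_of_decomp {q s p : ℝ} (hs : s ≠ 0) {d g δ : E} (hδ : δ = s⁻¹ • d + g) :
    q⁻¹ • (d - s • δ) + p • δ = (p / s) • d - (q⁻¹ * s - p) • g := by
  subst hδ
  match_scalars <;> field_simp <;> ring

lemma norm_ddim_update_le {q s p : ℝ} (hq0 : 0 < q) (hq1 : q ≤ 1) (hs0 : 0 < s) (hs1 : s ≤ 1)
    (hp0 : 0 ≤ p) (hps : p ≤ s) {d g δ : E} (hδ : δ = s⁻¹ • d + g)
    (hg : ‖g‖ ≤ (1 - p / s) * (1 / q - p / s)⁻¹ * ‖d‖) :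
    ‖q⁻¹ • (d - s • δ) + p • δ‖ ≤ ‖d‖ := by
  set c := q⁻¹ * s - p
  have hc : 0 ≤ c := by
    have : s ≤ q⁻¹ * s := le_mul_of_one_le_left hs0.le (one_le_inv₀ hq0 |>.mpr hq1)
    linarith
  have hcg : c * ‖g‖ ≤ (s - p) * ‖d‖ := by
    have hC : (1 - p / s) * (1 / q - p / s)⁻¹ = (s - p) * c⁻¹ := by
      rw [show 1 / q - p / s = c / s by simp only [c]; field_simp]
      field_simp
    rw [hC] at hg
    calc c * ‖g‖ ≤ c * ((s - p) * c⁻¹ * ‖d‖) := by gcongr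
      _ = (c * c⁻¹) * ((s - p) * ‖d‖) := by ring
      _ ≤ 1 * ((s - p) * ‖d‖) := by gcongr; exact mul_inv_le_one
      _ = (s - p) * ‖d‖ := one_mul _
  have hcoef : p / s + (s - p) ≤ 1 := by
    rw [div_add' _ _ _ hs0.ne', div_le_one hs0]
    nlinarith
  calc ‖q⁻¹ • (d - s • δ) + p • δ‖ = ‖(p / s) • d - c • g‖ := by
        rw [ddim_update_eq_of_decomp hs0.ne' hδ]
    _ ≤ ‖(p / s) • d‖ + ‖c • g‖ := norm_sub_le _ _
    _ = p / s * ‖d‖ + c * ‖g‖ := by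
        rw [norm_smul, norm_smul, Real.norm_of_nonneg (by positivity), Real.norm_of_nonneg hc]
    _ ≤ (p / s + (s - p)) * ‖d‖ := by linarith
    _ ≤ ‖d‖ := mul_le_of_le_one_left (norm_nonneg d) hcoef

lemma norm_ddim_step_sub_le {a a' : ℝ} (ha0 : 0 < a) (haa' : a ≤ a') (ha1 : a < 1)
    {x x' e e' g : E} (he : e' - e = (√(1 - a))⁻¹ • (x' - x) + g)
    (hg : ‖g‖ ≤ ((1 - √(1 - a') / √(1 - a)) * (1 / √a - √(1 - a') / √(1 - a))⁻¹) * ‖x' - x‖) :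
    ‖((√a)⁻¹ • (x' - √(1 - a) • e') + √(1 - a') • e')
      - ((√a)⁻¹ • (x - √(1 - a) • e) + √(1 - a') • e)‖ ≤ ‖x' - x‖ := by
  have hdiff : ((√a)⁻¹ • (x' - √(1 - a) • e') + √(1 - a') • e')
      - ((√a)⁻¹ • (x - √(1 - a) • e) + √(1 - a') • e)
      = (√a)⁻¹ • ((x' - x) - √(1 - a) • (e' - e)) + √(1 - a') • (e' - e) := by
    module
  rw [hdiff]
  exact norm_ddim_update_le (sqrt_pos.2 ha0) (sqrt_le_one.2 ha1.le) (sqrt_pos.2 (by linarith))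
    (sqrt_le_one.2 (by linarith)) (sqrt_nonneg _) (sqrt_le_sqrt (by linarith)) he hg

end

/-- The full backward process is non-expansive in L2 distance. -/
theorem backward_process_nonexpansive
    (n T : ℕ) (x x' : ℕ → EuclideanSpace ℝ (Fin n))
    (ᾱ : ℕ → ℝ) (γ : ℕ → EuclideanSpace ℝ (Fin n))
    (εθ : EuclideanSpace ℝ (Fin n) → ℕ → EuclideanSpace ℝ (Fin n))
    (hᾱ : ∀ t, 1 ≤ t → t ≤ T → 0 < ᾱ t ∧ ᾱ t < ᾱ (t - 1) ∧ ᾱ (t - 1) < 1)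
    (hstep : ∀ t, 1 ≤ t → t ≤ T →
      x (t - 1) = (Real.sqrt (ᾱ t))⁻¹ • (x t - Real.sqrt (1 - ᾱ t) • εθ (x t) t)
        + Real.sqrt (1 - ᾱ (t - 1)) • εθ (x t) t)
    (hstep' : ∀ t, 1 ≤ t → t ≤ T →
      x' (t - 1) = (Real.sqrt (ᾱ t))⁻¹ • (x' t - Real.sqrt (1 - ᾱ t) • εθ (x' t) t)
        + Real.sqrt (1 - ᾱ (t - 1)) • εθ (x' t) t)
    (hdecomp : ∀ t, 1 ≤ t → t ≤ T →
      εθ (x' t) t - εθ (x t) t = (Real.sqrt (1 - ᾱ t))⁻¹ • (x' t - x t) + γ t)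
    (hγ : ∀ t, 1 ≤ t → t ≤ T →
      ‖γ t‖ ≤ ((1 - Real.sqrt (1 - ᾱ (t - 1)) / Real.sqrt (1 - ᾱ t)) *
        (1 / Real.sqrt (ᾱ t) - Real.sqrt (1 - ᾱ (t - 1)) / Real.sqrt (1 - ᾱ t))⁻¹)
          * ‖x' t - x t‖) :
    ‖x' 0 - x 0‖ ≤ ‖x' T - x T‖ := by
  have hstep_le : ∀ t, 1 ≤ t → t ≤ T → ‖x' (t - 1) - x (t - 1)‖ ≤ ‖x' t - x t‖ := by
    intro t h1 hT
    obtain ⟨ha0, haa', ha'1⟩ := hᾱ t h1 hT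
    rw [hstep t h1 hT, hstep' t h1 hT]
    exact norm_ddim_step_sub_le ha0 haa'.le (haa'.trans ha'1) (hdecomp t h1 hT) (hγ t h1 hT)
  have hmono : MonotoneOn (fun t => ‖x' t - x t‖) (Set.Iic T) :=
    monotoneOn_of_sub_one_le Set.ordConnected_Iic fun t ht hT _ =>
      hstep_le t (Nat.one_le_iff_ne_zero.2 (by simpa using ht)) hT
  exact hmono (Set.mem_Iic.2 T.zero_le) (Set.mem_Iic.2 le_rfl) T.zero_le
end
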